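/- Fix reals 0 < R₁ < R₂ < R, α > 0, P_T > 0, 𝒩 > 0, γ > 0 and reflection coefficients 0 < ξ₂ ≤ ξ₁ ≤ 1; set κ = ξ₂/ξ₁. Let r₁ on [R₁, R₂] with density 2r/(R₂² − R₁²) and r₂ on [R₂, R] with density 2r/(R² − R₂²) be independent random variables, and let p₂ = P( P_T·ξ₁·r₁^{−2α}/(P_T·ξ₂·r₂^{−2α} + 𝒩) ≥ γ and P_T·ξ₂·r₂^{−2α}/𝒩 ≥ γ ). If γ < P_T·ξ₂·R₂^{−2α}/𝒩 and R₁^{−2α} ≤ 𝒩·γ/(ξ₁·P_T) + γ·κ·max{R^{−2α}, 𝒩·γ/(ξ₂·P_T)}, then p₂ = 0. -/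

import Mathlib

open Set
open scoped Interval

/-! Over the whole support `r₁ > R₁`, `r₂ ≤ R` the success event is empty. Decoding the far node
needs `r₂^{-2α} ≥ 𝒩γ/(ξ₂P_T)`, and `r₂ ≤ R` gives `r₂^{-2α} ≥ R^{-2α}`, so `r₂^{-2α}` dominates the
`max`. Decoding the near node is equivalent to `r₁^{-2α} ≥ 𝒩γ/(ξ₁P_T) + γκ·r₂^{-2α}`, which by
the hypothesis on `R₁^{-2α}` would force `r₁^{-2α} ≥ R₁^{-2α}`, contradicting `r₁ > R₁`. -/

theorem intervalIntegral_intervalIntegral_eq_zero {f : ℝ → ℝ → ℝ} {a b c d : ℝ}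
    (hf : ∀ x ∈ Ι a b, ∀ y ∈ [[c, d]], f x y = 0) :
    (∫ x in a..b, ∫ y in c..d, f x y) = 0 := by
  have hinner : ∀ x ∈ Ι a b, (∫ y in c..d, f x y) = 0 := fun x hx => by
    rw [intervalIntegral.integral_congr (hf x hx), intervalIntegral.integral_zero]
  rw [intervalIntegral.integral_congr_ae (g := fun _ => (0 : ℝ)) (.of_forall hinner),
    intervalIntegral.integral_zero]

section Decoding

variable {PT N γ ξ₁ ξ₂ a b : ℝ}

theorem le_of_snr_ge (hPT : 0 < PT) (hN : 0 < N) (hξ₂ : 0 < ξ₂)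
    (h : γ ≤ PT * ξ₂ * a / N) : N * γ / (ξ₂ * PT) ≤ a := by
  rw [le_div_iff₀ hN] at h
  rw [div_le_iff₀ (by positivity)]
  linarith

theorem sinr_ge_iff (hPT : 0 < PT) (hξ₁ : 0 < ξ₁) (hden : 0 < PT * ξ₂ * a + N) :
    γ ≤ PT * ξ₁ * b / (PT * ξ₂ * a + N) ↔ N * γ / (ξ₁ * PT) + γ * (ξ₂ / ξ₁) * a ≤ b := by
  have hrhs : N * γ / (ξ₁ * PT) + γ * (ξ₂ / ξ₁) * a = γ * (PT * ξ₂ * a + N) / (PT * ξ₁) := by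
    field_simp
    ring
  rw [le_div_iff₀ hden, hrhs, div_le_iff₀ (by positivity)]
  constructor <;> intro h <;> linarith

/-- `a` and `b` stand for the path gains `r₂^{-2α}` and `r₁^{-2α}`; `c` is any lower bound on `a`. -/
theorem not_sic_success {c : ℝ} (hPT : 0 < PT) (hN : 0 < N) (hγ : 0 < γ) (hξ₂ : 0 < ξ₂)
    (hξ₁ : 0 < ξ₁) (hca : c ≤ a)
    (hb : b < N * γ / (ξ₁ * PT) + γ * (ξ₂ / ξ₁) * max c (N * γ / (ξ₂ * PT))) :
    ¬(γ ≤ PT * ξ₁ * b / (PT * ξ₂ * a + N) ∧ γ ≤ PT * ξ₂ * a / N) := by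
  rintro ⟨hsinr, hsnr⟩
  have hmax : max c (N * γ / (ξ₂ * PT)) ≤ a := max_le hca (le_of_snr_ge hPT hN hξ₂ hsnr)
  have ha : 0 < a := lt_of_lt_of_le (by positivity) (le_of_snr_ge hPT hN hξ₂ hsnr)
  have hnear := (sinr_ge_iff hPT hξ₁ (by positivity)).mp hsinr
  have : γ * (ξ₂ / ξ₁) * max c (N * γ / (ξ₂ * PT)) ≤ γ * (ξ₂ / ξ₁) * a := by gcongr
  linarith

end Decoding

theorem backcom_p2_zero_middle_case
    (R₁ R₂ R α PT Noise γ ξ₁ ξ₂ κ : ℝ)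
    (h0 : 0 < R₁) (h12 : R₁ < R₂) (h2R : R₂ < R)
    (hα : 0 < α) (hPT : 0 < PT) (hNoise : 0 < Noise) (hγ : 0 < γ)
    (hξ2 : 0 < ξ₂) (hξ21 : ξ₂ ≤ ξ₁)
    (hκ : κ = ξ₂ / ξ₁)
    (hcond2 : R₁ ^ (-(2 * α)) ≤
      Noise * γ / (ξ₁ * PT) + γ * κ * max (R ^ (-(2 * α))) (Noise * γ / (ξ₂ * PT))) :
    (∫ r₁ in R₁..R₂, ∫ r₂ in R₂..R,
        if γ ≤ PT * ξ₁ * r₁ ^ (-(2 * α)) / (PT * ξ₂ * r₂ ^ (-(2 * α)) + Noise) ∧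
            γ ≤ PT * ξ₂ * r₂ ^ (-(2 * α)) / Noise
          then 2 * r₁ / (R₂ ^ 2 - R₁ ^ 2) * (2 * r₂ / (R ^ 2 - R₂ ^ 2)) else 0) = 0 := by
  have hexp : -(2 * α) < 0 := by linarith
  refine intervalIntegral_intervalIntegral_eq_zero fun r₁ hr₁ r₂ hr₂ => if_neg ?_
  rw [uIoc_of_le h12.le] at hr₁
  rw [uIcc_of_le h2R.le] at hr₂
  refine not_sic_success hPT hNoise hγ hξ2 (hξ2.trans_le hξ21)
    (Real.rpow_le_rpow_of_nonpos (by linarith [hr₂.1]) hr₂.2 hexp.le) ?_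
  rw [← hκ]
  exact (Real.rpow_lt_rpow_of_neg h0 hr₁.1 hexp).trans_le hcond2
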